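/- Consider the unconstrained problem min_{x∈ℝ} |x| and define, for smoothing parameter 1, G(x) = |x| − inf_{x'∈ℝ} ( |x'| + (1/2)(x' − x)² ). Then for every x with 0 < |x| ≤ 1 one has G(x) = |x| − x²/2 and the subdifferential of the absolute value at x is the singleton {sgn(x)}, so the Karush–Kuhn–Tucker error K(x) = min{ |q| : q ∈ ∂|·|(x) }² equals 1. Consequently G(x) → 0 as x → 0 with x ≠ 0 while K(x) = 1 for all such x, so there is no constant c > 0 with K(x) ≤ c · G(x) for all x ≠ 0. -/

import Mathlib

open Filter Topology

noncomputable section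

/-- The self-centered smoothed gap (smoothing parameter `1`) for `min_{x∈ℝ} |x|`:
`G(x) = |x| − inf_{x'} (|x'| + (1/2)(x' − x)²)`. -/
def Gabs (x : ℝ) : ℝ := |x| - ⨅ x' : ℝ, (|x'| + 1 / 2 * (x' - x) ^ 2)

/-- The subdifferential of the absolute value at `x`. -/
def absSubdiff (x : ℝ) : Set ℝ := {q : ℝ | ∀ u : ℝ, |x| + q * (u - x) ≤ |u|}

/-- The KKT error `K(x) = min{|q| : q ∈ ∂|·|(x)}²` for the problem `min_{x∈ℝ} |x|`. -/
def Kabs (x : ℝ) : ℝ := sInf {r : ℝ | ∃ q ∈ absSubdiff x, r = |q|} ^ 2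

/-!
For `0 < |x| ≤ 1` the proximal point of `x` for `|·|` is `0`, so `G(x) = |x| - x²/2`, which
tends to `0` with `x`. Away from the kink, however, `|·|` is differentiable with derivative
`sgn x` of modulus `1`, so `K(x) = 1`: near `0`, `K` cannot be dominated by any multiple of `G`.
-/

lemma Real.sign_mul_self_eq_abs (x : ℝ) : Real.sign x * x = |x| := by
  rcases lt_trichotomy x 0 with hx | rfl | hx
  · rw [Real.sign_of_neg hx, abs_of_neg hx, neg_one_mul]
  · simp
  · rw [Real.sign_of_pos hx, abs_of_pos hx, one_mul]

lemma Real.abs_sign_of_ne_zero {x : ℝ} (hx : x ≠ 0) : |Real.sign x| = 1 := by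
  rcases Real.sign_apply_eq_of_ne_zero x hx with h | h <;> simp [h]

/-- The Moreau envelope of `|·|` is the Huber function, equal to `x²/2` on `[-1, 1]`. -/
lemma iInf_abs_add_half_sq_sub_eq {x : ℝ} (hx : |x| ≤ 1) :
    ⨅ y : ℝ, (|y| + 1 / 2 * (y - x) ^ 2) = x ^ 2 / 2 := by
  suffices IsLeast (Set.range fun y : ℝ => |y| + 1 / 2 * (y - x) ^ 2) (x ^ 2 / 2) from
    this.isGLB.ciInf_eq
  refine ⟨⟨0, by ring_nf⟩, Set.forall_mem_range.2 fun y => ?_⟩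
  have hxy : x * y ≤ |y| :=
    calc x * y ≤ |x| * |y| := by rw [← abs_mul]; exact le_abs_self _
      _ ≤ |y| := mul_le_of_le_one_left (abs_nonneg y) hx
  nlinarith [sq_nonneg y]

lemma Gabs_of_abs_le_one {x : ℝ} (hx : |x| ≤ 1) : Gabs x = |x| - x ^ 2 / 2 := by
  rw [Gabs, iInf_abs_add_half_sq_sub_eq hx]

lemma mem_absSubdiff_iff {x q : ℝ} : q ∈ absSubdiff x ↔ |q| ≤ 1 ∧ q * x = |x| := by
  constructor
  · intro hq
    have hqx : q * x = |x| := by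
      have h0 := hq 0
      have h2 := hq (2 * x)
      simp only [zero_sub, abs_zero, abs_mul, abs_two] at h0 h2
      linarith
    refine ⟨?_, hqx⟩
    have hqq := hq q
    rw [mul_sub, hqx, add_sub_cancel, ← sq, ← sq_abs] at hqq
    nlinarith [abs_nonneg q]
  · rintro ⟨hq, hqx⟩ u
    calc |x| + q * (u - x) = q * u := by rw [mul_sub, hqx, add_sub_cancel]
      _ ≤ |q| * |u| := by rw [← abs_mul]; exact le_abs_self _
      _ ≤ |u| := mul_le_of_le_one_left (abs_nonneg u) hq

lemma absSubdiff_of_ne_zero {x : ℝ} (hx : x ≠ 0) : absSubdiff x = {Real.sign x} := by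
  ext q
  rw [mem_absSubdiff_iff, Set.mem_singleton_iff, ← Real.sign_mul_self_eq_abs x]
  constructor
  · exact fun ⟨_, hqx⟩ => mul_right_cancel₀ hx hqx
  · rintro rfl
    exact ⟨(Real.abs_sign_of_ne_zero hx).le, rfl⟩

lemma Kabs_of_ne_zero {x : ℝ} (hx : x ≠ 0) : Kabs x = 1 := by
  have : {r : ℝ | ∃ q ∈ absSubdiff x, r = |q|} = {1} := by
    simp [absSubdiff_of_ne_zero hx, Real.abs_sign_of_ne_zero hx]
  rw [Kabs, this, csInf_singleton, one_pow]

lemma tendsto_Gabs_nhds_zero : Tendsto Gabs (𝓝 0) (𝓝 0) := by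
  have hnear : ∀ᶠ x : ℝ in 𝓝 0, |x| ≤ 1 := by
    simpa using (continuous_abs.tendsto (0 : ℝ)).eventually (ge_mem_nhds (by simp))
  have hcont : Tendsto (fun x : ℝ => |x| - x ^ 2 / 2) (𝓝 0) (𝓝 0) := by
    have : Continuous fun x : ℝ => |x| - x ^ 2 / 2 := by fun_prop
    simpa using this.tendsto 0
  exact hcont.congr' (hnear.mono fun x hx => (Gabs_of_abs_le_one hx).symm)

/-- counterexample: the smoothed gap cannot bound the KKT error
without smoothness. For `0 < |x| ≤ 1` one has `G(x) = |x| − x²/2`, the subdifferential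
of `|·|` at `x` is `{sgn x}`, and `K(x) = 1`.  Consequently `G(x) → 0` as `x → 0`,
`x ≠ 0`, while `K(x) = 1` there, so no constant `c > 0` satisfies `K(x) ≤ c G(x)` for
all `x ≠ 0`. -/
theorem KKT_not_bounded_by_smoothedGap :
    (∀ x : ℝ, 0 < |x| → |x| ≤ 1 →
      Gabs x = |x| - x ^ 2 / 2 ∧
      absSubdiff x = {Real.sign x} ∧
      Kabs x = 1) ∧
    Tendsto Gabs (𝓝[≠] 0) (𝓝 0) ∧
    ¬ ∃ c : ℝ, 0 < c ∧ ∀ x : ℝ, x ≠ 0 → Kabs x ≤ c * Gabs x := by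
  have hG : Tendsto Gabs (𝓝[≠] 0) (𝓝 0) := tendsto_Gabs_nhds_zero.mono_left nhdsWithin_le_nhds
  refine ⟨fun x hx0 hx1 => ⟨Gabs_of_abs_le_one hx1, absSubdiff_of_ne_zero (abs_pos.mp hx0),
    Kabs_of_ne_zero (abs_pos.mp hx0)⟩, hG, ?_⟩
  rintro ⟨c, -, hc⟩
  have hsmall : ∀ᶠ x in 𝓝[≠] (0 : ℝ), c * Gabs x < 1 :=
    (hG.const_mul c).eventually (gt_mem_nhds (by simp))
  obtain ⟨x, hx1, hx0⟩ := (hsmall.and self_mem_nhdsWithin).exists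
  linarith [hc x hx0, Kabs_of_ne_zero hx0]
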